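/- Consider the disturbed discrete-time LTI system x_{k+1} = A x_k + B u_k + E d_k, y_k = C x_k + D u_k + d_k with A ∈ ℝ^{n×n}, B ∈ ℝ^{n×m}, E ∈ ℝ^{n×p}, C ∈ ℝ^{p×n}, D ∈ ℝ^{p×m}, where the pair (A, [B E]) is controllable. Let T_ini ≥ ℓ, where ℓ is the lag of the system, and let N ≥ 1, T ≥ T_ini + N. Let (u^d_i, d^d_i, y^d_i) for i = −T_ini+1, …, T be an input–disturbance–output trajectory of the system (i.e., generated by some state sequence via the recursions), with extended states ξ^d_i for i = 1, …, T. Assume the sequence of generalized inputs (col(u^d_i, d^d_i))_{i=1}^T is persistently exciting of order n + T_ini + N. Then, for any k ≥ 0, sequences u_{k−T_ini}, …, u_{k+N−1} ∈ ℝᵐ, d_k, …, d_{k+N−1} ∈ ℝᵖ, y_{k−T_ini}, …, y_{k+N−1} ∈ ℝᵖ form a valid trajectory of the system (i.e., there exist states x_i for i = k−T_ini, …, k+N−1 and disturbances d_i ∈ ℝᵖ for i = k−T_ini, …, k−1 such that x_{i+1} = A x_i + B u_i + E d_i and y_i = C x_i + D u_i + d_i hold for i = k−T_ini, …, k+N−1)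 if and only if there exists α ∈ ℝ^{T−N+1} such that col(ξ_k, u_k, …, u_{k+N−1}, d_k, …, d_{k+N−1}, y_k, …, y_{k+N−1}) = col(H₁(ξ^d_1, …, ξ^d_{T−N+1}), H_N(u^d), H_N(d^d), H_N(y^d)) · α, where ξ_k is the extended state built from u_{k−T_ini}, …, u_{k−1} and y_{k−T_ini}, …, y_{k−1}. -/
import Mathlib


open Matrix

/-- Hankel matrix of order `L` built from the (1-indexed) data `s 1, …, s T`
of vectors in `ℝ^ι`: block entry at block position `(i, j)` (1-indexed) is
`s (i + j - 1)`. -/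
def hankel (ι : Type*) (L T : ℕ) (s : ℤ → ι → ℝ) :
    Matrix (Fin L × ι) (Fin (T - L + 1)) ℝ :=
  fun q j => s ((q.1 : ℕ) + (j : ℕ) + 1) q.2

/-- A (1-indexed) sequence `s 1, …, s T` of vectors in `ℝ^ι` is persistently
exciting of order `L` if its Hankel matrix of order `L` has full row rank. -/
def PersistentlyExciting (ι : Type*) [Fintype ι] [DecidableEq ι]
    (L T : ℕ) (s : ℤ → ι → ℝ) : Prop :=
  (hankel ι L T s).rank = Fintype.card (Fin L × ι)

/-- The extended state `ξ_k = col(u_{k-T_ini}, …, u_{k-1}, y_{k-T_ini}, …, y_{k-1})`. -/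
def extState (m p Tini : ℕ) (u : ℤ → Fin m → ℝ) (y : ℤ → Fin p → ℝ) (k : ℤ) :
    (Fin Tini × Fin m) ⊕ (Fin Tini × Fin p) → ℝ :=
  Sum.elim (fun q => u (k - (Tini : ℤ) + (q.1 : ℕ)) q.2)
    (fun q => y (k - (Tini : ℤ) + (q.1 : ℕ)) q.2)

/-- Controllability matrix `[M, AM, …, A^{n-1}M]` of a pair `(A, M)` with
`M : ℝ^{n×ι}`. -/
def ctrbMat (n : ℕ) (ι : Type*) (A : Matrix (Fin n) (Fin n) ℝ)
    (M : Matrix (Fin n) ι ℝ) : Matrix (Fin n) (Fin n × ι) ℝ :=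
  fun i q => (A ^ (q.1 : ℕ) * M) i q.2

/-- Observability matrix `col(C, CA, …, CA^{j-1})` of order `j`. -/
def obsMat (n p : ℕ) (A : Matrix (Fin n) (Fin n) ℝ) (C : Matrix (Fin p) (Fin n) ℝ)
    (j : ℕ) : Matrix (Fin j × Fin p) (Fin n) ℝ :=
  fun q c => (C * A ^ (q.1 : ℕ)) q.2 c

lemma helper_vecMul_eq_zero {ι κ : Type*} [Fintype ι] [Fintype κ]
    (M : Matrix ι κ ℝ) (h : M.rank = Fintype.card ι) {v : ι → ℝ}
    (hv : M.vecMul v = 0) : v = 0 := by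
  have hli : LinearIndependent ℝ (fun i => M i) := by
    rw [linearIndependent_iff_card_eq_finrank_span]
    rw [← h, M.rank_eq_finrank_span_row]
    rfl
  have := Matrix.vecMul_injective_iff.mpr hli
  have h0 : M.vecMul v = M.vecMul 0 := by rw [hv]; simp [Matrix.vecMul]
  exact this h0

lemma helper_mulVec_surj {ι κ : Type*} [Fintype ι] [Fintype κ]
    (M : Matrix ι κ ℝ) (h : ∀ v : ι → ℝ, M.vecMul v = 0 → v = 0) :
    Function.Surjective M.mulVec := by
  have hinj : Function.Injective M.vecMul := by
    intro a b hab
    simp only at hab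
    have : M.vecMul (a - b) = 0 := by
      show (a - b) ᵥ* M = 0
      rw [Matrix.sub_vecMul, hab, sub_self]
    have := h _ this
    exact sub_eq_zero.mp this
  have hli : LinearIndependent ℝ (fun i => M i) := Matrix.vecMul_injective_iff.mp hinj
  have hrank : M.rank = Fintype.card ι := hli.rank_matrix
  have : LinearMap.range M.mulVecLin = ⊤ := by
    apply Submodule.eq_top_of_finrank_eq
    rw [← Matrix.rank, hrank, Module.finrank_pi]
  intro b
  exact LinearMap.range_eq_top.mp this b

lemma helper_cayley {n : ℕ} (A : Matrix (Fin n) (Fin n) ℝ) :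
    ∃ c : ℕ → ℝ, A ^ n = ∑ k ∈ Finset.range n, c k • A ^ k := by
  have hm := A.charpoly_monic
  have hd : A.charpoly.natDegree = n := by
    rw [Matrix.charpoly_natDegree_eq_dim, Fintype.card_fin]
  have h0 := A.aeval_self_charpoly
  rw [Polynomial.aeval_eq_sum_range, hd, Finset.sum_range_succ] at h0
  have hc : A.charpoly.coeff n = 1 := by
    have := hm.coeff_natDegree; rwa [hd] at this
  rw [hc, one_smul] at h0
  refine ⟨fun k => -(A.charpoly.coeff k), ?_⟩
  have := eq_neg_of_add_eq_zero_right h0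
  rw [this, ← Finset.sum_neg_distrib]
  exact Finset.sum_congr rfl fun k _ => (neg_smul _ _).symm

lemma key_rank (n L T : ℕ) {ι : Type*} [Fintype ι] [DecidableEq ι]
    (A : Matrix (Fin n) (Fin n) ℝ) (Bt : Matrix (Fin n) ι ℝ)
    (hctrb : (ctrbMat n ι A Bt).rank = n)
    (hL : 1 ≤ L) (hT : L ≤ T) (a : ℤ) (ha : a ≤ 1)
    (s : ℤ → ι → ℝ) (xd : ℤ → Fin n → ℝ)
    (hx : ∀ i : ℤ, a ≤ i → i ≤ (T : ℤ) → xd (i+1) = A.mulVec (xd i) + Bt.mulVec (s i))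
    (hPE : PersistentlyExciting ι (n + L) T s)
    (ξ : Fin n → ℝ) (η : ℕ → ι → ℝ) (hsupp : ∀ t, L ≤ t → ∀ c, η t c = 0)
    (hR : ∀ i : ℤ, a ≤ i → i ≤ (T:ℤ) - L + 1 →
      (ξ ⬝ᵥ xd i) + ∑ t ∈ Finset.range L, ∑ c, η t c * s (i + (t:ℕ)) c = 0) :
    ξ = 0 ∧ ∀ t c, η t c = 0 := by
  classical
  by_cases hι : Nonempty ι
  case neg =>
    have hn0 : n = 0 := by
      have h1 := (ctrbMat n ι A Bt).rank_le_card_width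
      rw [hctrb] at h1
      simp only [Fintype.card_prod, Fintype.card_fin] at h1
      have : Fintype.card ι = 0 := Fintype.card_eq_zero_iff.mpr (by
        constructor; intro c; exact hι ⟨c⟩)
      rw [this, Nat.mul_zero] at h1
      omega
    constructor
    · subst hn0; funext i; exact i.elim0
    · intro t c; exact absurd ⟨c⟩ hι
  case pos =>
    have hcard : 1 ≤ Fintype.card ι := Fintype.card_pos
    have hTnL : n + L ≤ T := by
      by_contra hcon
      push_neg at hcon
      have h1 := (hankel ι (n+L) T s).rank_le_card_width
      rw [hPE] at h1
      simp only [Fintype.card_prod, Fintype.card_fin] at h1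
      have h2 : T - (n+L) = 0 := by omega
      rw [h2] at h1
      -- (n+L) * card ι ≤ 1
      have : 2 ≤ n + L := by omega
      nlinarith
    obtain ⟨ck, hck⟩ := helper_cayley A
    set V : ℕ → ℕ → ι → ℝ := fun k t c =>
      (if t < k then (ξ ᵥ* (A ^ (k-1-t) * Bt)) c else 0) +
      (if k ≤ t ∧ t < k + L then η (t-k) c else 0) with hV
    have hVshift : ∀ k t c, V (k+1) (t+1) c = V k t c := by
      intro k t c
      simp only [hV]
      have h1 : k+1-1-(t+1) = k-1-t := by omega
      have h2 : t+1-(k+1) = t-k := by omega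
      rw [h1, h2]
      congr 1
      · exact if_congr (by omega) rfl rfl
      · exact if_congr (by constructor <;> (intro h; constructor <;> omega)) rfl rfl
    have hB : ∀ k : ℕ, ∀ i : ℤ, a ≤ i → i + (k:ℤ) ≤ (T:ℤ) - L + 1 →
        ((ξ ᵥ* (A ^ k)) ⬝ᵥ xd i) + ∑ t ∈ Finset.range (k+L), ∑ c, V k t c * s (i+(t:ℕ)) c = 0 := by
      intro k
      induction k with
      | zero =>
        intro i h1 h2
        rw [pow_zero, Matrix.vecMul_one]
        have hs : ∀ t ∈ Finset.range (0+L), ∑ c, V 0 t c * s (i+(t:ℕ)) c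
            = ∑ c, η t c * s (i+(t:ℕ)) c := by
          intro t ht
          rw [Finset.mem_range] at ht
          apply Finset.sum_congr rfl
          intro c _
          simp only [hV]
          rw [if_neg (by omega), if_pos (by omega)]
          norm_num
        rw [Finset.sum_congr rfl hs]
        have := hR i h1 (by push_cast at h2 ⊢; omega)
        simpa using this
      | succ k ih =>
        intro i h1 h2
        have e1 := ih (i+1) (by omega) (by push_cast at h2 ⊢; omega)
        rw [hx i h1 (by push_cast at h2 ⊢; omega)] at e1
        rw [dotProduct_add, dotProduct_mulVec, dotProduct_mulVec, Matrix.vecMul_vecMul,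
          Matrix.vecMul_vecMul, ← pow_succ] at e1
        -- e1 : (ξ ᵥ* A^(k+1)) ⬝ᵥ xd i + (ξ ᵥ* (A^k * Bt)) ⬝ᵥ s i
        --      + ∑ t ∈ range (k+L), ∑ c, V k t c * s (i+1+t) c = 0
        have hsplit : ∑ t ∈ Finset.range (k+1+L), ∑ c, V (k+1) t c * s (i+(t:ℕ)) c
            = (∑ t ∈ Finset.range (k+L), ∑ c, V k t c * s ((i+1)+(t:ℕ)) c)
              + (ξ ᵥ* (A^k * Bt)) ⬝ᵥ s i := by
          have : k+1+L = (k+L)+1 := by omega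
          rw [this, Finset.sum_range_succ']
          congr 1
          · apply Finset.sum_congr rfl
            intro t _
            apply Finset.sum_congr rfl
            intro c _
            rw [hVshift]
            congr 2
            push_cast; ring
          · simp only [hV, Nat.cast_zero, add_zero]
            rw [dotProduct]
            apply Finset.sum_congr rfl
            intro c _
            rw [if_pos (by omega), if_neg (by omega)]
            norm_num
        rw [hsplit]
        push_cast at e1 ⊢
        linarith [e1]
    -- padding: V k is supported on [0, k+L)
    have hpad : ∀ k : ℕ, k ≤ n → ∀ i : ℤ,
        ∑ t ∈ Finset.range (n+L), ∑ c, V k t c * s (i+(t:ℕ)) c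
        = ∑ t ∈ Finset.range (k+L), ∑ c, V k t c * s (i+(t:ℕ)) c := by
      intro k hk i
      symm
      apply Finset.sum_subset (Finset.range_subset_range.mpr (by omega))
      intro t _ ht
      rw [Finset.mem_range, not_lt] at ht
      apply Finset.sum_eq_zero
      intro c _
      have hz : V k t c = 0 := by
        simp only [hV]
        rw [if_neg (by omega), if_neg (by omega)]
        norm_num
      rw [hz, zero_mul]
    -- Cayley-Hamilton cancellation of the state term
    have hxc : ∀ i : ℤ, (ξ ᵥ* A ^ n) ⬝ᵥ xd i
        = ∑ k ∈ Finset.range n, ck k * ((ξ ᵥ* A ^ k) ⬝ᵥ xd i) := by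
      intro i
      simp only [← Matrix.dotProduct_mulVec]
      rw [hck]
      have h1 : (∑ k ∈ Finset.range n, ck k • A ^ k) *ᵥ xd i
          = fun r => ∑ k ∈ Finset.range n, ck k * ((A ^ k) *ᵥ xd i) r := by
        funext r
        simp only [Matrix.mulVec, dotProduct, Matrix.sum_apply, Matrix.smul_apply,
          smul_eq_mul, Finset.sum_mul, Finset.mul_sum]
        rw [Finset.sum_comm]
        apply Finset.sum_congr rfl; intro k _
        apply Finset.sum_congr rfl; intro r' _
        ring
      rw [h1]
      simp only [dotProduct, Finset.mul_sum]
      rw [Finset.sum_comm]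
      apply Finset.sum_congr rfl; intro k _
      apply Finset.sum_congr rfl; intro r _
      ring
    -- the combined annihilator kills the PE Hankel matrix
    set Vb : Fin (n+L) × ι → ℝ :=
      fun q => V n q.1 q.2 - ∑ k ∈ Finset.range n, ck k * V k q.1 q.2 with hVbdef
    have hVbH : (hankel ι (n+L) T s).vecMul Vb = 0 := by
      funext j
      show ∑ q : Fin (n+L) × ι, Vb q * s ((q.1:ℕ) + (j:ℕ) + 1) q.2 = 0
      set i : ℤ := (j:ℕ) + 1 with hi
      have hjlt : (j : ℕ) < T - (n+L) + 1 := j.is_lt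
      have hkey : ∀ k : ℕ, k ≤ n →
          ∑ t ∈ Finset.range (n+L), ∑ c, V k t c * s (i+(t:ℕ)) c
          = -((ξ ᵥ* A ^ k) ⬝ᵥ xd i) := by
        intro k hk
        rw [hpad k hk]
        have := hB k i (by omega) (by push_cast; omega)
        linarith
      have hstep : ∑ q : Fin (n+L) × ι, Vb q * s ((q.1:ℕ) + (j:ℕ) + 1) q.2
          = ∑ t ∈ Finset.range (n+L), ∑ c,
              (V n t c - ∑ k ∈ Finset.range n, ck k * V k t c) * s (i+(t:ℕ)) c := by
        rw [Fintype.sum_prod_type]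
        rw [← Fin.sum_univ_eq_sum_range
          (fun t => ∑ c, (V n t c - ∑ k ∈ Finset.range n, ck k * V k t c) * s (i+(t:ℕ)) c) (n+L)]
        apply Finset.sum_congr rfl; intro t _
        apply Finset.sum_congr rfl; intro c _
        have harg : ((t:ℕ) : ℤ) + (j:ℕ) + 1 = i + (t:ℕ) := by omega
        rw [harg]
      rw [hstep]
      have hexp : ∑ t ∈ Finset.range (n+L), ∑ c,
            (V n t c - ∑ k ∈ Finset.range n, ck k * V k t c) * s (i+(t:ℕ)) c
          = (∑ t ∈ Finset.range (n+L), ∑ c, V n t c * s (i+(t:ℕ)) c)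
            - ∑ k ∈ Finset.range n, ck k *
                (∑ t ∈ Finset.range (n+L), ∑ c, V k t c * s (i+(t:ℕ)) c) := by
        have e1 : ∑ t ∈ Finset.range (n+L), ∑ c,
              (V n t c - ∑ k ∈ Finset.range n, ck k * V k t c) * s (i+(t:ℕ)) c
            = ∑ t ∈ Finset.range (n+L), ((∑ c, V n t c * s (i+(t:ℕ)) c)
                - ∑ k ∈ Finset.range n, ∑ c, ck k * (V k t c * s (i+(t:ℕ)) c)) := by
          apply Finset.sum_congr rfl; intro t _
          have e2 : ∀ c : ι, (V n t c - ∑ k ∈ Finset.range n, ck k * V k t c) * s (i+(t:ℕ)) c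
              = V n t c * s (i+(t:ℕ)) c
                - ∑ k ∈ Finset.range n, ck k * (V k t c * s (i+(t:ℕ)) c) := by
            intro c
            rw [sub_mul, Finset.sum_mul]
            congr 1
            apply Finset.sum_congr rfl; intro k _
            ring
          rw [Finset.sum_congr rfl (fun c _ => e2 c), Finset.sum_sub_distrib]
          congr 1
          exact Finset.sum_comm
        rw [e1, Finset.sum_sub_distrib]
        congr 1
        rw [Finset.sum_comm]
        apply Finset.sum_congr rfl; intro k _
        rw [Finset.mul_sum]
        apply Finset.sum_congr rfl; intro t _
        rw [Finset.mul_sum]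
      rw [hexp, hkey n le_rfl]
      have hsum2 : ∑ k ∈ Finset.range n, ck k *
            (∑ t ∈ Finset.range (n+L), ∑ c, V k t c * s (i+(t:ℕ)) c)
          = ∑ k ∈ Finset.range n, ck k * (-((ξ ᵥ* A ^ k) ⬝ᵥ xd i)) := by
        apply Finset.sum_congr rfl; intro k hk
        rw [Finset.mem_range] at hk
        rw [hkey k (le_of_lt hk)]
      rw [hsum2]
      simp only [mul_neg]
      rw [Finset.sum_neg_distrib]
      have := hxc i
      linarith
    -- extract pointwise vanishing
    have hVb0 : ∀ t : ℕ, t < n + L → ∀ c,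
        V n t c = ∑ k ∈ Finset.range n, ck k * V k t c := by
      intro t ht c
      have hz : Vb = 0 := helper_vecMul_eq_zero _ hPE hVbH
      have := congrFun hz (⟨t, ht⟩, c)
      simp only [hVbdef, Pi.zero_apply] at this
      linarith [this]
    -- all eta vanish, by downward induction
    have hη0 : ∀ d : ℕ, ∀ r : ℕ, ∀ c, L - r ≤ d → η r c = 0 := by
      intro d
      induction d with
      | zero => intro r c hr; exact hsupp r (by omega) c
      | succ d ih =>
        intro r c hr
        rcases le_or_gt L r with h | h
        · exact hsupp r h c
        · have h1 := hVb0 (n+r) (by omega) c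
          have hL1 : V n (n+r) c = η r c := by
            simp only [hV]
            rw [if_neg (by omega), if_pos (by omega)]
            have : n + r - n = r := by omega
            rw [this]; norm_num
          have hR0 : ∀ k ∈ Finset.range n, ck k * V k (n+r) c = 0 := by
            intro k hk
            rw [Finset.mem_range] at hk
            have hz : V k (n+r) c = 0 := by
              simp only [hV]
              rw [if_neg (by omega)]
              rcases le_or_gt (k+L) (n+r) with h2 | h2
              · rw [if_neg (by omega)]; norm_num
              · rw [if_pos (by omega), ih (n+r-k) c (by omega)]; norm_num
            rw [hz, mul_zero]
          rw [hL1, Finset.sum_eq_zero hR0] at h1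
          exact h1
    have hηfull : ∀ t c, η t c = 0 := fun t c => hη0 L t c (by omega)
    refine ⟨?_, hηfull⟩
    -- the controllability part
    have hξB : ∀ j : ℕ, j < n → ∀ c, (ξ ᵥ* (A ^ j * Bt)) c = 0 := by
      intro j
      induction j using Nat.strong_induction_on with
      | _ j ih =>
        intro hj c
        have h1 := hVb0 (n-1-j) (by omega) c
        have hL1 : V n (n-1-j) c = (ξ ᵥ* (A ^ j * Bt)) c := by
          simp only [hV]
          rw [if_pos (by omega), if_neg (by omega)]
          have hjj : n-1-(n-1-j) = j := by omega
          rw [hjj]; norm_num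
        have hR0 : ∀ k ∈ Finset.range n, ck k * V k (n-1-j) c = 0 := by
          intro k hk
          rw [Finset.mem_range] at hk
          have hz : V k (n-1-j) c = 0 := by
            simp only [hV]
            have hsec : (if k ≤ n-1-j ∧ n-1-j < k + L then η (n-1-j-k) c else 0) = 0 := by
              split_ifs with h3
              · exact hηfull _ c
              · rfl
            rw [hsec]
            rcases lt_or_ge (n-1-j) k with h2 | h2
            · rw [if_pos h2, ih (k-1-(n-1-j)) (by omega) (by omega) c]
              norm_num
            · rw [if_neg (by omega)]; norm_num
          rw [hz, mul_zero]
        rw [hL1, Finset.sum_eq_zero hR0] at h1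
        exact h1
    apply helper_vecMul_eq_zero (ctrbMat n ι A Bt)
      (by rw [hctrb]; rw [Fintype.card_fin])
    funext q
    show ∑ r, ξ r * ctrbMat n ι A Bt r q = 0
    have := hξB (q.1 : ℕ) q.1.is_lt q.2
    simp only [Matrix.vecMul, dotProduct, ctrbMat] at this ⊢
    exact this

def stSeq {n : ℕ} {ι : Type*} [Fintype ι] (A : Matrix (Fin n) (Fin n) ℝ)
    (Bt : Matrix (Fin n) ι ℝ) (x0 : Fin n → ℝ) (w : ℕ → ι → ℝ) : ℕ → Fin n → ℝ
  | 0 => x0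
  | (t+1) => A.mulVec (stSeq A Bt x0 w t) + Bt.mulVec (w t)

lemma mulVec_sum_comm {R C κ : Type*} [Fintype C] [Fintype κ] (M : Matrix R C ℝ)
    (α : κ → ℝ) (v : κ → C → ℝ) :
    M.mulVec (fun c => ∑ j, α j * v j c) = fun r => ∑ j, α j * M.mulVec (v j) r := by
  funext r
  simp only [Matrix.mulVec, dotProduct, Finset.mul_sum]
  rw [Finset.sum_comm]
  apply Finset.sum_congr rfl; intro j _
  apply Finset.sum_congr rfl; intro c _
  ring

lemma stSeq_sum {n : ℕ} {ι κ : Type*} [Fintype ι] [Fintype κ]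
    (A : Matrix (Fin n) (Fin n) ℝ) (Bt : Matrix (Fin n) ι ℝ) (α : κ → ℝ)
    (x0 : κ → Fin n → ℝ) (w : κ → ℕ → ι → ℝ) (t : ℕ) :
    stSeq A Bt (fun r => ∑ j, α j * x0 j r) (fun t' c => ∑ j, α j * w j t' c) t
      = fun r => ∑ j, α j * stSeq A Bt (x0 j) (w j) t r := by
  induction t with
  | zero => rfl
  | succ t ih =>
    show A.mulVec (stSeq A Bt _ _ t) + Bt.mulVec (fun c => ∑ j, α j * w j t c) = _
    rw [ih, mulVec_sum_comm, mulVec_sum_comm]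
    funext r
    simp only [Pi.add_apply, ← Finset.sum_add_distrib, ← mul_add]
    rfl

lemma stSeq_congr {n : ℕ} {ι : Type*} [Fintype ι]
    (A : Matrix (Fin n) (Fin n) ℝ) (Bt : Matrix (Fin n) ι ℝ) (x0 : Fin n → ℝ)
    (w w' : ℕ → ι → ℝ) (t : ℕ) (h : ∀ t' < t, w t' = w' t') :
    stSeq A Bt x0 w t = stSeq A Bt x0 w' t := by
  induction t with
  | zero => rfl
  | succ t ih =>
    show A.mulVec (stSeq A Bt x0 w t) + Bt.mulVec (w t) = _
    rw [ih (fun t' ht' => h t' (by omega)), h t (by omega)]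
    rfl

lemma stSeq_eq {n : ℕ} {ι : Type*} [Fintype ι]
    (A : Matrix (Fin n) (Fin n) ℝ) (Bt : Matrix (Fin n) ι ℝ)
    (x : ℤ → Fin n → ℝ) (w : ℤ → ι → ℝ) (a : ℤ) (L : ℕ)
    (h : ∀ t : ℕ, t < L → x (a + t + 1) = A.mulVec (x (a + t)) + Bt.mulVec (w (a + t))) :
    ∀ t : ℕ, t ≤ L → stSeq A Bt (x a) (fun t' => w (a + (t':ℕ))) t = x (a + (t:ℕ)) := by
  intro t
  induction t with
  | zero => intro _; simp [stSeq]
  | succ t ih =>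
    intro ht
    show A.mulVec (stSeq A Bt (x a) _ t) + Bt.mulVec (w (a + (t:ℕ))) = x (a + ((t:ℕ)+1:ℕ))
    rw [ih (by omega), ← h t (by omega)]
    congr 1
    push_cast; ring

lemma sumElim_mulVec {n' m p : ℕ} (B : Matrix (Fin n') (Fin m) ℝ) (E : Matrix (Fin n') (Fin p) ℝ)
    (uu : Fin m → ℝ) (dd : Fin p → ℝ) :
    (Matrix.of fun i => Sum.elim (B i) (E i)).mulVec (Sum.elim uu dd)
      = B.mulVec uu + E.mulVec dd := by
  funext r
  simp [Matrix.mulVec, dotProduct, Fintype.sum_sum_type]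

def zInp (n m p L : ℕ) (z : (Fin n ⊕ (Fin L × (Fin m ⊕ Fin p))) → ℝ) :
    ℕ → (Fin m ⊕ Fin p) → ℝ :=
  fun t c => if h : t < L then z (Sum.inr (⟨t, h⟩, c)) else 0

def Psi (n m p Tini N : ℕ) (A : Matrix (Fin n) (Fin n) ℝ)
    (Bt : Matrix (Fin n) (Fin m ⊕ Fin p) ℝ) (C : Matrix (Fin p) (Fin n) ℝ)
    (Dt : Matrix (Fin p) (Fin m ⊕ Fin p) ℝ)
    (z : (Fin n ⊕ (Fin (Tini + N) × (Fin m ⊕ Fin p))) → ℝ) :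
    (((Fin Tini × Fin m) ⊕ (Fin Tini × Fin p)) ⊕
      ((Fin N × Fin m) ⊕ ((Fin N × Fin p) ⊕ (Fin N × Fin p)))) → ℝ :=
  Sum.elim
    (Sum.elim (fun q => zInp n m p (Tini+N) z q.1 (Sum.inl q.2))
      (fun q => (C.mulVec (stSeq A Bt (fun r => z (Sum.inl r)) (zInp n m p (Tini+N) z) q.1)
               + Dt.mulVec (zInp n m p (Tini+N) z q.1)) q.2))
    (Sum.elim (fun q => zInp n m p (Tini+N) z (Tini + q.1) (Sum.inl q.2))
      (Sum.elim (fun q => zInp n m p (Tini+N) z (Tini + q.1) (Sum.inr q.2))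
        (fun q => (C.mulVec (stSeq A Bt (fun r => z (Sum.inl r)) (zInp n m p (Tini+N) z) (Tini + q.1))
               + Dt.mulVec (zInp n m p (Tini+N) z (Tini + q.1))) q.2)))

lemma zInp_sum {n m p L κ : Type} [Fintype κ] : True := trivial

lemma zInp_sum' (n m p L : ℕ) {κ : Type*} [Fintype κ] (α : κ → ℝ)
    (z : κ → (Fin n ⊕ (Fin L × (Fin m ⊕ Fin p))) → ℝ) :
    zInp n m p L (fun r => ∑ j, α j * z j r)
      = fun t c => ∑ j, α j * zInp n m p L (z j) t c := by
  funext t c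
  simp only [zInp]
  split_ifs with h
  · rfl
  · simp

lemma Psi_sum (n m p Tini N : ℕ) (A : Matrix (Fin n) (Fin n) ℝ)
    (Bt : Matrix (Fin n) (Fin m ⊕ Fin p) ℝ) (C : Matrix (Fin p) (Fin n) ℝ)
    (Dt : Matrix (Fin p) (Fin m ⊕ Fin p) ℝ) {κ : Type*} [Fintype κ] (α : κ → ℝ)
    (z : κ → (Fin n ⊕ (Fin (Tini + N) × (Fin m ⊕ Fin p))) → ℝ) :
    Psi n m p Tini N A Bt C Dt (fun r => ∑ j, α j * z j r)
      = fun row => ∑ j, α j * Psi n m p Tini N A Bt C Dt (z j) row := by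
  have hst : ∀ t : ℕ, stSeq A Bt (fun r => ∑ j, α j * z j (Sum.inl r))
        (fun t' c => ∑ j, α j * zInp n m p (Tini+N) (z j) t' c) t
      = fun r => ∑ j, α j * stSeq A Bt (fun r' => z j (Sum.inl r')) (zInp n m p (Tini+N) (z j)) t r :=
    fun t => stSeq_sum A Bt α _ _ t
  funext row
  rcases row with (q | q) | (q | (q | q)) <;>
    simp only [Psi, Sum.elim_inl, Sum.elim_inr, zInp_sum', hst, Pi.add_apply,
      mulVec_sum_comm, ← Finset.sum_add_distrib, ← mul_add]

/-- Lemma 2 of the paper: extended fundamental lemma. For the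
disturbed LTI system `x⁺ = Ax + Bu + Ed, y = Cx + Du + d` with `(A, [B E])`
controllable, `T_ini ≥ ℓ`, `N ≥ 1`, `T ≥ T_ini + N`, and data `(u^d, d^d, y^d)`
generated by the system whose generalized input `col(u^d, d^d)` is persistently
exciting of order `n + T_ini + N`: sequences `(u_i)`, `(d_i)`, `(y_i)` form a valid
trajectory of the system iff the stacked vector
`col(ξ_k, u_{k..k+N-1}, d_{k..k+N-1}, y_{k..k+N-1})` lies in the range of
`col(H₁(ξ^d), H_N(u^d), H_N(d^d), H_N(y^d))`. -/
theorem extended_fundamental_lemma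
    (n m p Tini N T : ℕ)
    (A : Matrix (Fin n) (Fin n) ℝ) (B : Matrix (Fin n) (Fin m) ℝ)
    (E : Matrix (Fin n) (Fin p) ℝ)
    (C : Matrix (Fin p) (Fin n) ℝ) (D : Matrix (Fin p) (Fin m) ℝ)
    (hctrb : (ctrbMat n (Fin m ⊕ Fin p) A
      (Matrix.of fun i => Sum.elim (B i) (E i))).rank = n)
    (hobs : ∃ j ≤ n, (obsMat n p A C j).rank = n)
    (hlag : sInf {j : ℕ | (obsMat n p A C j).rank = n} ≤ Tini)
    (hN : 1 ≤ N) (hT : Tini + N ≤ T)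
    (ud : ℤ → Fin m → ℝ) (dd : ℤ → Fin p → ℝ) (yd : ℤ → Fin p → ℝ)
    (hdata : ∃ xd : ℤ → Fin n → ℝ, ∀ i : ℤ, 1 - (Tini : ℤ) ≤ i → i ≤ (T : ℤ) →
      xd (i + 1) = A.mulVec (xd i) + B.mulVec (ud i) + E.mulVec (dd i) ∧
      yd i = C.mulVec (xd i) + D.mulVec (ud i) + dd i)
    (hPE : PersistentlyExciting (Fin m ⊕ Fin p) (n + Tini + N) T
      (fun i => Sum.elim (ud i) (dd i))) :
    ∀ k : ℕ, ∀ (u : ℤ → Fin m → ℝ) (d : ℤ → Fin p → ℝ) (y : ℤ → Fin p → ℝ),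
      (∃ (x : ℤ → Fin n → ℝ) (d' : ℤ → Fin p → ℝ),
        (∀ i : ℤ, (k : ℤ) ≤ i → i ≤ (k : ℤ) + (N : ℤ) - 1 → d' i = d i) ∧
        ∀ i : ℤ, (k : ℤ) - (Tini : ℤ) ≤ i → i ≤ (k : ℤ) + (N : ℤ) - 1 →
          x (i + 1) = A.mulVec (x i) + B.mulVec (u i) + E.mulVec (d' i) ∧
          y i = C.mulVec (x i) + D.mulVec (u i) + d' i)
      ↔
      (∃ α : Fin (T - N + 1) → ℝ,
        (Sum.elim (extState m p Tini u y (k : ℤ))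
          (Sum.elim (fun q : Fin N × Fin m => u ((k : ℤ) + (q.1 : ℕ)) q.2)
            (Sum.elim (fun q : Fin N × Fin p => d ((k : ℤ) + (q.1 : ℕ)) q.2)
                      (fun q : Fin N × Fin p => y ((k : ℤ) + (q.1 : ℕ)) q.2))))
        =
        Matrix.mulVec
          (fun rj =>
            Sum.elim
              (fun ξidx => fun j : Fin (T - N + 1) =>
                extState m p Tini ud yd ((j : ℕ) + 1) ξidx)
              (Sum.elim
                (fun q : Fin N × Fin m => fun j : Fin (T - N + 1) =>
                  ud ((q.1 : ℕ) + (j : ℕ) + 1) q.2)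
                (Sum.elim
                  (fun q : Fin N × Fin p => fun j : Fin (T - N + 1) =>
                    dd ((q.1 : ℕ) + (j : ℕ) + 1) q.2)
                  (fun q : Fin N × Fin p => fun j : Fin (T - N + 1) =>
                    yd ((q.1 : ℕ) + (j : ℕ) + 1) q.2)))
              rj)
          α) := by
  classical
  intro k u d y
  obtain ⟨xd, hxd⟩ := hdata
  set Bt : Matrix (Fin n) (Fin m ⊕ Fin p) ℝ := Matrix.of fun i => Sum.elim (B i) (E i) with hBt
  set Dt : Matrix (Fin p) (Fin m ⊕ Fin p) ℝ :=
    Matrix.of fun r => Sum.elim (D r) ((1 : Matrix (Fin p) (Fin p) ℝ) r) with hDt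
  set sd : ℤ → (Fin m ⊕ Fin p) → ℝ := fun i => Sum.elim (ud i) (dd i) with hsd
  have hBtmul : ∀ (uu : Fin m → ℝ) (dd' : Fin p → ℝ),
      Bt.mulVec (Sum.elim uu dd') = B.mulVec uu + E.mulVec dd' :=
    fun uu dd' => sumElim_mulVec B E uu dd'
  have hDtmul : ∀ (uu : Fin m → ℝ) (dd' : Fin p → ℝ),
      Dt.mulVec (Sum.elim uu dd') = D.mulVec uu + dd' := by
    intro uu dd'
    rw [hDt, sumElim_mulVec D 1 uu dd', Matrix.one_mulVec]
  have hxd' : ∀ i : ℤ, 1 - (Tini:ℤ) ≤ i → i ≤ (T:ℤ) →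
      xd (i+1) = A.mulVec (xd i) + Bt.mulVec (sd i) := by
    intro i h1 h2
    rw [(hxd i h1 h2).1, hsd, hBtmul, add_assoc]
  have hyd : ∀ i : ℤ, 1 - (Tini:ℤ) ≤ i → i ≤ (T:ℤ) →
      yd i = C.mulVec (xd i) + Dt.mulVec (sd i) := by
    intro i h1 h2
    rw [(hxd i h1 h2).2, hsd, hDtmul, add_assoc]
  set zcol : Fin (T - N + 1) → (Fin n ⊕ (Fin (Tini + N) × (Fin m ⊕ Fin p))) → ℝ :=
    fun j => Sum.elim (xd (1 - (Tini:ℤ) + (j:ℕ)))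
      (fun q => sd (1 - (Tini:ℤ) + (j:ℕ) + (q.1:ℕ)) q.2) with hzcol
  set K : Matrix (Fin n ⊕ (Fin (Tini + N) × (Fin m ⊕ Fin p))) (Fin (T - N + 1)) ℝ :=
    Matrix.of fun r j => zcol j r with hK
  have hNT : N ≤ T := by omega
  -- the three structural claims
  have CA : ∀ (x : ℤ → Fin n → ℝ) (d' : ℤ → Fin p → ℝ),
      (∀ i : ℤ, (k : ℤ) ≤ i → i ≤ (k : ℤ) + (N : ℤ) - 1 → d' i = d i) →
      (∀ i : ℤ, (k : ℤ) - (Tini : ℤ) ≤ i → i ≤ (k : ℤ) + (N : ℤ) - 1 →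
        x (i + 1) = A.mulVec (x i) + B.mulVec (u i) + E.mulVec (d' i) ∧
        y i = C.mulVec (x i) + D.mulVec (u i) + d' i) →
      ∃ z, Psi n m p Tini N A Bt C Dt z =
        (Sum.elim (extState m p Tini u y (k : ℤ))
          (Sum.elim (fun q : Fin N × Fin m => u ((k : ℤ) + (q.1 : ℕ)) q.2)
            (Sum.elim (fun q : Fin N × Fin p => d ((k : ℤ) + (q.1 : ℕ)) q.2)
                      (fun q : Fin N × Fin p => y ((k : ℤ) + (q.1 : ℕ)) q.2)))) := by
    intro x d' hd' hdyn
    set a : ℤ := (k:ℤ) - Tini with ha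
    set wfull : ℤ → (Fin m ⊕ Fin p) → ℝ := fun i => Sum.elim (u i) (d' i) with hwfull
    set z : (Fin n ⊕ (Fin (Tini+N) × (Fin m ⊕ Fin p))) → ℝ :=
      Sum.elim (x a) (fun q => wfull (a + (q.1:ℕ)) q.2) with hz
    refine ⟨z, ?_⟩
    have hw : ∀ t : ℕ, t < Tini + N →
        zInp n m p (Tini+N) z t = wfull (a + (t:ℕ)) := by
      intro t ht
      funext c
      simp only [zInp, hz]
      rw [dif_pos ht]
      rfl
    have hdyn' : ∀ t : ℕ, t < Tini + N →
        x (a + (t:ℕ) + 1) = A.mulVec (x (a + (t:ℕ))) + Bt.mulVec (wfull (a + (t:ℕ))) := by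
      intro t ht
      have hb := (hdyn (a + (t:ℕ)) (by simp only [ha]; omega)
        (by simp only [ha]; push_cast; omega)).1
      rw [hb, hwfull, hBtmul, add_assoc]
    have hst : ∀ t : ℕ, t ≤ Tini + N →
        stSeq A Bt (fun r => z (Sum.inl r)) (zInp n m p (Tini+N) z) t = x (a + (t:ℕ)) := by
      intro t ht
      rw [stSeq_congr A Bt _ _ (fun t' => wfull (a + (t':ℕ))) t (fun t' ht' => hw t' (by omega))]
      have hx0 : (fun r => z (Sum.inl r)) = x a := rfl
      rw [hx0]
      exact stSeq_eq A Bt x wfull a (Tini+N) hdyn' t ht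
    have hY : ∀ t : ℕ, t < Tini + N →
        C.mulVec (stSeq A Bt (fun r => z (Sum.inl r)) (zInp n m p (Tini+N) z) t)
          + Dt.mulVec (zInp n m p (Tini+N) z t) = y (a + (t:ℕ)) := by
      intro t ht
      rw [hst t (by omega), hw t ht, hwfull, hDtmul,
        (hdyn (a + (t:ℕ)) (by simp only [ha]; omega)
          (by simp only [ha]; push_cast; omega)).2, add_assoc]
    funext row
    rcases row with (q | q) | (q | (q | q))
    · simp only [Psi, Sum.elim_inl, extState]
      rw [hw q.1 (by omega), hwfull]
      rfl
    · simp only [Psi, Sum.elim_inl, Sum.elim_inr, extState]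
      rw [hY q.1 (by omega)]
    · simp only [Psi, Sum.elim_inl, Sum.elim_inr]
      rw [hw (Tini + q.1) (by omega), hwfull]
      have harg : a + ((Tini + (q.1:ℕ) : ℕ):ℤ) = (k:ℤ) + ((q.1:ℕ):ℤ) := by
        simp only [ha]; push_cast; omega
      rw [harg]
      rfl
    · simp only [Psi, Sum.elim_inl, Sum.elim_inr]
      rw [hw (Tini + q.1) (by omega), hwfull]
      have harg : a + ((Tini + (q.1:ℕ) : ℕ):ℤ) = (k:ℤ) + ((q.1:ℕ):ℤ) := by
        simp only [ha]; push_cast; omega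
      rw [harg]
      show d' ((k:ℤ) + ((q.1:ℕ):ℤ)) q.2 = d ((k:ℤ) + ((q.1:ℕ):ℤ)) q.2
      rw [hd' ((k:ℤ) + ((q.1:ℕ):ℤ)) (by omega) (by omega)]
    · simp only [Psi, Sum.elim_inl, Sum.elim_inr]
      rw [hY (Tini + q.1) (by omega)]
      have harg : a + ((Tini + (q.1:ℕ) : ℕ):ℤ) = (k:ℤ) + ((q.1:ℕ):ℤ) := by
        simp only [ha]; push_cast; omega
      rw [harg]
  have CB : ∀ z, Psi n m p Tini N A Bt C Dt z =
        (Sum.elim (extState m p Tini u y (k : ℤ))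
          (Sum.elim (fun q : Fin N × Fin m => u ((k : ℤ) + (q.1 : ℕ)) q.2)
            (Sum.elim (fun q : Fin N × Fin p => d ((k : ℤ) + (q.1 : ℕ)) q.2)
                      (fun q : Fin N × Fin p => y ((k : ℤ) + (q.1 : ℕ)) q.2)))) →
      (∃ (x : ℤ → Fin n → ℝ) (d' : ℤ → Fin p → ℝ),
        (∀ i : ℤ, (k : ℤ) ≤ i → i ≤ (k : ℤ) + (N : ℤ) - 1 → d' i = d i) ∧
        ∀ i : ℤ, (k : ℤ) - (Tini : ℤ) ≤ i → i ≤ (k : ℤ) + (N : ℤ) - 1 →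
          x (i + 1) = A.mulVec (x i) + B.mulVec (u i) + E.mulVec (d' i) ∧
          y i = C.mulVec (x i) + D.mulVec (u i) + d' i) := by
    intro z hz
    have h1 : ∀ q : Fin Tini × Fin m,
        zInp n m p (Tini+N) z (q.1:ℕ) (Sum.inl q.2) = u ((k:ℤ) - Tini + (q.1:ℕ)) q.2 := by
      intro q
      have := congrFun hz (Sum.inl (Sum.inl q))
      simpa only [Psi, Sum.elim_inl, extState] using this
    have h2 : ∀ q : Fin Tini × Fin p,
        (C.mulVec (stSeq A Bt (fun r => z (Sum.inl r)) (zInp n m p (Tini+N) z) (q.1:ℕ))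
          + Dt.mulVec (zInp n m p (Tini+N) z (q.1:ℕ))) q.2
          = y ((k:ℤ) - Tini + (q.1:ℕ)) q.2 := by
      intro q
      have := congrFun hz (Sum.inl (Sum.inr q))
      simpa only [Psi, Sum.elim_inl, Sum.elim_inr, extState] using this
    have h3 : ∀ q : Fin N × Fin m,
        zInp n m p (Tini+N) z (Tini + (q.1:ℕ)) (Sum.inl q.2) = u ((k:ℤ) + (q.1:ℕ)) q.2 := by
      intro q
      have := congrFun hz (Sum.inr (Sum.inl q))
      simpa only [Psi, Sum.elim_inl, Sum.elim_inr] using this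
    have h4 : ∀ q : Fin N × Fin p,
        zInp n m p (Tini+N) z (Tini + (q.1:ℕ)) (Sum.inr q.2) = d ((k:ℤ) + (q.1:ℕ)) q.2 := by
      intro q
      have := congrFun hz (Sum.inr (Sum.inr (Sum.inl q)))
      simpa only [Psi, Sum.elim_inl, Sum.elim_inr] using this
    have h5 : ∀ q : Fin N × Fin p,
        (C.mulVec (stSeq A Bt (fun r => z (Sum.inl r)) (zInp n m p (Tini+N) z) (Tini + (q.1:ℕ)))
          + Dt.mulVec (zInp n m p (Tini+N) z (Tini + (q.1:ℕ)))) q.2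
          = y ((k:ℤ) + (q.1:ℕ)) q.2 := by
      intro q
      have := congrFun hz (Sum.inr (Sum.inr (Sum.inr q)))
      simpa only [Psi, Sum.elim_inl, Sum.elim_inr] using this
    have hu : ∀ t : ℕ, t < Tini + N → ∀ c,
        zInp n m p (Tini+N) z t (Sum.inl c) = u ((k:ℤ) - Tini + (t:ℕ)) c := by
      intro t ht c
      rcases lt_or_ge t Tini with h | h
      · exact h1 (⟨t, h⟩, c)
      · have h3' := h3 (⟨t - Tini, by omega⟩, c)
        simp only [Fin.val_mk] at h3'
        have e1 : Tini + (t - Tini) = t := by omega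
        have e2 : (k:ℤ) + ((t - Tini : ℕ):ℤ) = (k:ℤ) - Tini + (t:ℕ) := by omega
        rw [e1, e2] at h3'
        exact h3'
    have hyrow : ∀ t : ℕ, t < Tini + N → ∀ c,
        (C.mulVec (stSeq A Bt (fun r => z (Sum.inl r)) (zInp n m p (Tini+N) z) t)
          + Dt.mulVec (zInp n m p (Tini+N) z t)) c = y ((k:ℤ) - Tini + (t:ℕ)) c := by
      intro t ht c
      rcases lt_or_ge t Tini with h | h
      · exact h2 (⟨t, h⟩, c)
      · have h5' := h5 (⟨t - Tini, by omega⟩, c)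
        simp only [Fin.val_mk] at h5'
        have e1 : Tini + (t - Tini) = t := by omega
        have e2 : (k:ℤ) + ((t - Tini : ℕ):ℤ) = (k:ℤ) - Tini + (t:ℕ) := by omega
        rw [e1, e2] at h5'
        exact h5'
    refine ⟨fun i => stSeq A Bt (fun r => z (Sum.inl r)) (zInp n m p (Tini+N) z)
        (i - ((k:ℤ) - Tini)).toNat,
      fun i c => zInp n m p (Tini+N) z (i - ((k:ℤ) - Tini)).toNat (Sum.inr c), ?_, ?_⟩
    · intro i hi1 hi2
      funext c
      have ht' : (i - (k:ℤ)).toNat < N := by omega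
      have h4' := h4 (⟨(i - (k:ℤ)).toNat, ht'⟩, c)
      simp only [Fin.val_mk] at h4'
      have e2 : (k:ℤ) + (((i - (k:ℤ)).toNat : ℕ):ℤ) = i := by omega
      rw [e2] at h4'
      have e1 : (i - ((k:ℤ) - Tini)).toNat = Tini + (i - (k:ℤ)).toNat := by omega
      show zInp n m p (Tini+N) z (i - ((k:ℤ) - Tini)).toNat (Sum.inr c) = d i c
      rw [e1]
      exact h4'
    · intro i hi1 hi2
      obtain ⟨t, hti⟩ : ∃ t : ℕ, (t:ℤ) = i - ((k:ℤ) - Tini) :=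
        ⟨(i - ((k:ℤ) - Tini)).toNat, by omega⟩
      have htlt : t < Tini + N := by omega
      have e0 : (i - ((k:ℤ) - Tini)).toNat = t := by omega
      have hwt : zInp n m p (Tini+N) z t
          = Sum.elim (u i) (fun c => zInp n m p (Tini+N) z t (Sum.inr c)) := by
        funext c
        rcases c with c | c
        · rw [Sum.elim_inl]
          have h' := hu t htlt c
          have harg : (k:ℤ) - Tini + (t:ℕ) = i := by omega
          rw [harg] at h'
          exact h'
        · rfl
      have hBtw : Bt.mulVec (zInp n m p (Tini+N) z t)
          = B.mulVec (u i) + E.mulVec (fun c => zInp n m p (Tini+N) z t (Sum.inr c)) := by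
        conv_lhs => rw [hwt]
        rw [hBtmul]
      have hDtw : Dt.mulVec (zInp n m p (Tini+N) z t)
          = D.mulVec (u i) + (fun c => zInp n m p (Tini+N) z t (Sum.inr c)) := by
        conv_lhs => rw [hwt]
        rw [hDtmul]
      constructor
      · show stSeq A Bt (fun r => z (Sum.inl r)) (zInp n m p (Tini+N) z)
              ((i + 1 - ((k:ℤ) - Tini)).toNat)
            = A.mulVec (stSeq A Bt (fun r => z (Sum.inl r)) (zInp n m p (Tini+N) z)
                ((i - ((k:ℤ) - Tini)).toNat))
              + B.mulVec (u i)
              + E.mulVec (fun c => zInp n m p (Tini+N) z ((i - ((k:ℤ) - Tini)).toNat) (Sum.inr c))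
        have e1 : (i + 1 - ((k:ℤ) - Tini)).toNat = t + 1 := by omega
        rw [e0, e1]
        show A.mulVec (stSeq A Bt (fun r => z (Sum.inl r)) (zInp n m p (Tini+N) z) t)
            + Bt.mulVec (zInp n m p (Tini+N) z t) = _
        rw [hBtw, ← add_assoc]
      · funext c
        show y i c = (C.mulVec (stSeq A Bt (fun r => z (Sum.inl r)) (zInp n m p (Tini+N) z)
                ((i - ((k:ℤ) - Tini)).toNat))
              + D.mulVec (u i)
              + (fun c' => zInp n m p (Tini+N) z ((i - ((k:ℤ) - Tini)).toNat) (Sum.inr c'))) c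
        rw [e0]
        have h' := hyrow t htlt c
        have harg : (k:ℤ) - Tini + (t:ℕ) = i := by omega
        rw [harg] at h'
        rw [← h', hDtw]
        simp only [Pi.add_apply]
        ring
  have CC : ∀ j : Fin (T - N + 1), Psi n m p Tini N A Bt C Dt (zcol j) =
      fun row => (Sum.elim
              (fun ξidx => fun j : Fin (T - N + 1) =>
                extState m p Tini ud yd ((j : ℕ) + 1) ξidx)
              (Sum.elim
                (fun q : Fin N × Fin m => fun j : Fin (T - N + 1) =>
                  ud ((q.1 : ℕ) + (j : ℕ) + 1) q.2)
                (Sum.elim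
                  (fun q : Fin N × Fin p => fun j : Fin (T - N + 1) =>
                    dd ((q.1 : ℕ) + (j : ℕ) + 1) q.2)
                  (fun q : Fin N × Fin p => fun j : Fin (T - N + 1) =>
                    yd ((q.1 : ℕ) + (j : ℕ) + 1) q.2)))
              row) j := by
    intro j
    have hjT : (j:ℕ) ≤ T - N := by have := j.is_lt; omega
    set aj : ℤ := 1 - (Tini:ℤ) + (j:ℕ) with haj
    have hw : ∀ t : ℕ, t < Tini + N →
        zInp n m p (Tini+N) (zcol j) t = sd (aj + (t:ℕ)) := by
      intro t ht
      funext c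
      simp only [zInp, hzcol]
      rw [dif_pos ht]
      simp only [Sum.elim_inr, haj]
    have hst : ∀ t : ℕ, t ≤ Tini + N →
        stSeq A Bt (fun r => zcol j (Sum.inl r)) (zInp n m p (Tini+N) (zcol j)) t
          = xd (aj + (t:ℕ)) := by
      intro t ht
      rw [stSeq_congr A Bt _ _ (fun t' => sd (aj + (t':ℕ))) t (fun t' ht' => hw t' (by omega))]
      have hx0 : (fun r => zcol j (Sum.inl r)) = xd aj := rfl
      rw [hx0]
      exact stSeq_eq A Bt xd sd aj (Tini+N)
        (fun t' ht' => hxd' (aj + (t':ℕ)) (by simp only [haj]; omega)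
          (by simp only [haj]; push_cast; omega)) t ht
    have hY : ∀ t : ℕ, t < Tini + N →
        C.mulVec (stSeq A Bt (fun r => zcol j (Sum.inl r)) (zInp n m p (Tini+N) (zcol j)) t)
          + Dt.mulVec (zInp n m p (Tini+N) (zcol j) t) = yd (aj + (t:ℕ)) := by
      intro t ht
      rw [hst t (by omega), hw t ht,
        ← hyd (aj + (t:ℕ)) (by simp only [haj]; omega) (by simp only [haj]; push_cast; omega)]
    funext row
    rcases row with (q | q) | (q | (q | q))
    · simp only [Psi, Sum.elim_inl, extState]
      rw [hw q.1 (by omega)]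
      have harg : aj + ((q.1:ℕ):ℤ) = ((j:ℕ):ℤ) + 1 - (Tini:ℤ) + ((q.1:ℕ):ℤ) := by
        simp only [haj]; omega
      rw [harg, hsd]
      rfl
    · simp only [Psi, Sum.elim_inl, Sum.elim_inr, extState]
      rw [hY q.1 (by omega)]
      have harg : aj + ((q.1:ℕ):ℤ) = ((j:ℕ):ℤ) + 1 - (Tini:ℤ) + ((q.1:ℕ):ℤ) := by
        simp only [haj]; omega
      rw [harg]
    · simp only [Psi, Sum.elim_inl, Sum.elim_inr]
      rw [hw (Tini + q.1) (by omega)]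
      have harg : aj + ((Tini + (q.1:ℕ) : ℕ):ℤ) = ((q.1:ℕ):ℤ) + ((j:ℕ):ℤ) + 1 := by
        simp only [haj]; push_cast; omega
      rw [harg, hsd]
      rfl
    · simp only [Psi, Sum.elim_inl, Sum.elim_inr]
      rw [hw (Tini + q.1) (by omega)]
      have harg : aj + ((Tini + (q.1:ℕ) : ℕ):ℤ) = ((q.1:ℕ):ℤ) + ((j:ℕ):ℤ) + 1 := by
        simp only [haj]; push_cast; omega
      rw [harg, hsd]
      rfl
    · simp only [Psi, Sum.elim_inl, Sum.elim_inr]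
      rw [hY (Tini + q.1) (by omega)]
      have harg : aj + ((Tini + (q.1:ℕ) : ℕ):ℤ) = ((q.1:ℕ):ℤ) + ((j:ℕ):ℤ) + 1 := by
        simp only [haj]; push_cast; omega
      rw [harg]
  have CD : ∀ α : Fin (T - N + 1) → ℝ,
      Matrix.mulVec
          (fun rj =>
            Sum.elim
              (fun ξidx => fun j : Fin (T - N + 1) =>
                extState m p Tini ud yd ((j : ℕ) + 1) ξidx)
              (Sum.elim
                (fun q : Fin N × Fin m => fun j : Fin (T - N + 1) =>
                  ud ((q.1 : ℕ) + (j : ℕ) + 1) q.2)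
                (Sum.elim
                  (fun q : Fin N × Fin p => fun j : Fin (T - N + 1) =>
                    dd ((q.1 : ℕ) + (j : ℕ) + 1) q.2)
                  (fun q : Fin N × Fin p => fun j : Fin (T - N + 1) =>
                    yd ((q.1 : ℕ) + (j : ℕ) + 1) q.2)))
              rj)
          α
        = Psi n m p Tini N A Bt C Dt (K.mulVec α) := by
    intro α
    have hKα : K.mulVec α = fun r => ∑ j, α j * zcol j r := by
      funext r
      simp only [Matrix.mulVec, dotProduct, hK, Matrix.of_apply]
      apply Finset.sum_congr rfl; intro j _
      ring
    rw [hKα, Psi_sum]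
    funext row
    simp only [Matrix.mulVec, dotProduct]
    apply Finset.sum_congr rfl; intro j _
    rw [CC j]
    ring
  have CE : Function.Surjective K.mulVec := by
    apply helper_mulVec_surj
    intro v hv
    set ξ : Fin n → ℝ := fun r => v (Sum.inl r) with hξ
    set η : ℕ → (Fin m ⊕ Fin p) → ℝ :=
      fun t c => if h : t < Tini + N then v (Sum.inr (⟨t, h⟩, c)) else 0 with hη
    have hsupp : ∀ t, Tini + N ≤ t → ∀ c, η t c = 0 := by
      intro t ht c
      simp only [hη]
      rw [dif_neg (by omega)]
    have hR : ∀ i : ℤ, 1 - (Tini:ℤ) ≤ i → i ≤ (T:ℤ) - (Tini+N:ℕ) + 1 →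
        (ξ ⬝ᵥ xd i) + ∑ t ∈ Finset.range (Tini+N), ∑ c, η t c * sd (i + (t:ℕ)) c = 0 := by
      intro i h1 h2
      have hjn : ∃ jn : ℕ, (jn : ℤ) = i + Tini - 1 ∧ jn < T - N + 1 := by
        refine ⟨(i + Tini - 1).toNat, ?_, ?_⟩
        · omega
        · push_cast at h2 ⊢
          omega
      obtain ⟨jn, hjn1, hjn2⟩ := hjn
      have hcol := congrFun hv (⟨jn, hjn2⟩ : Fin (T - N + 1))
      simp only [Matrix.vecMul, dotProduct, hK, Matrix.of_apply, Pi.zero_apply] at hcol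
      rw [Fintype.sum_sum_type] at hcol
      simp only [hzcol, Sum.elim_inl, Sum.elim_inr] at hcol
      have he1 : 1 - (Tini:ℤ) + ((⟨jn, hjn2⟩ : Fin (T - N + 1)) : ℕ) = i := by
        simp only [Fin.val_mk]; omega
      rw [he1] at hcol
      have hsum2 : ∑ q : Fin (Tini + N) × (Fin m ⊕ Fin p),
            v (Sum.inr q) * sd (i + ((q.1:ℕ):ℤ)) q.2
          = ∑ t ∈ Finset.range (Tini+N), ∑ c, η t c * sd (i + (t:ℕ)) c := by
        rw [Fintype.sum_prod_type]
        rw [← Fin.sum_univ_eq_sum_range (fun t => ∑ c, η t c * sd (i + (t:ℕ)) c) (Tini+N)]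
        apply Finset.sum_congr rfl; intro t _
        apply Finset.sum_congr rfl; intro c _
        simp only [hη]
        rw [dif_pos t.is_lt]
      have hξd : ξ ⬝ᵥ xd i = ∑ r, v (Sum.inl r) * xd i r := rfl
      rw [hξd, ← hsum2]
      exact hcol
    have hPE' : PersistentlyExciting (Fin m ⊕ Fin p) (n + (Tini + N)) T sd := by
      have h : n + (Tini + N) = n + Tini + N := by omega
      rw [h]
      exact hPE
    obtain ⟨hξ0, hη0⟩ := key_rank n (Tini+N) T A Bt hctrb (by omega) (by omega)
      (1 - (Tini:ℤ)) (by omega) sd xd hxd' hPE' ξ η hsupp hR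
    funext r
    rcases r with r | q
    · exact congrFun hξ0 r
    · have h := hη0 (q.1:ℕ) q.2
      simp only [hη] at h
      rw [dif_pos q.1.is_lt] at h
      simpa using h
  constructor
  · rintro ⟨x, d', hd', hdyn⟩
    obtain ⟨z, hz⟩ := CA x d' hd' hdyn
    obtain ⟨α, hα⟩ := CE z
    refine ⟨α, ?_⟩
    rw [CD α, hα, hz]
  · rintro ⟨α, hα⟩
    apply CB (K.mulVec α)
    rw [← CD α, ← hα]
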